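/- For every integer n ≥ 1, the n-th Pell number satisfies P(n) = (3^(n²+n) mod (3^(2n) − 2·3^n − 1)) mod 3^n. -/

import Mathlib

/-!
With `b = 3 ^ n`, the modulus is `b ^ 2 - 2 * b - 1`, the characteristic polynomial of the Pell
recurrence evaluated at `b`. Hence `b ^ (n + 1) ≡ P(n + 1) * b + P(n)` modulo it, and since
`0 ≤ P(n) ≤ P(n + 1) < b - 2` for `n ≥ 2`, the right-hand side is already the least residue
and its last base-`b` digit is `P(n)`.
-/

/-- The Pell numbers: `P(0) = 0`, `P(1) = 1`, `P(n+2) = 2·P(n+1) + P(n)`. -/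
def pell : ℕ → ℤ
  | 0 => 0
  | 1 => 1
  | n + 2 => 2 * pell (n + 1) + pell n

lemma pell_nonneg : ∀ n, 0 ≤ pell n
  | 0 => le_rfl
  | 1 => zero_le_one
  | n + 2 => by
    have := pell_nonneg n
    have := pell_nonneg (n + 1)
    rw [pell]
    linarith

lemma pell_le_pell_succ : ∀ n, pell n ≤ pell (n + 1)
  | 0 => zero_le_one
  | n + 1 => by
    have := pell_nonneg n
    have := pell_nonneg (n + 1)
    change pell (n + 1) ≤ 2 * pell (n + 1) + pell n
    linarith

lemma pell_succ_add_three_le_three_pow {n : ℕ} (hn : 2 ≤ n) : pell (n + 1) + 3 ≤ 3 ^ n := by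
  induction n, hn using Nat.le_induction with
  | base => norm_num [pell]
  | succ m _ ih =>
    have := pell_le_pell_succ m
    change 2 * pell (m + 1) + pell m + 3 ≤ 3 ^ (m + 1)
    rw [pow_succ]
    linarith

lemma pow_succ_modEq_pell (b : ℤ) :
    ∀ k, b ^ (k + 1) ≡ pell (k + 1) * b + pell k [ZMOD b ^ 2 - 2 * b - 1]
  | 0 => by simp [pell]
  | k + 1 => by
    rw [pow_succ b (k + 1)]
    refine ((pow_succ_modEq_pell b k).mul_right b).trans
      (Int.modEq_iff_dvd.mpr ⟨-pell (k + 1), ?_⟩)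
    rw [pell]
    ring

lemma pow_succ_emod_emod_eq_pell {b : ℤ} {k : ℕ} (hk : pell (k + 1) + 3 ≤ b) :
    b ^ (k + 1) % (b ^ 2 - 2 * b - 1) % b = pell k := by
  have hk0 := pell_nonneg k
  have hk1 := pell_le_pell_succ k
  have hlt : pell (k + 1) * b + pell k < b ^ 2 - 2 * b - 1 := by nlinarith
  rw [pow_succ_modEq_pell b k, Int.emod_eq_of_lt (by nlinarith) hlt, add_comm,
    Int.add_mul_emod_self_right, Int.emod_eq_of_lt hk0 (by linarith)]

theorem stmt_15 (n : ℕ) (hn : 1 ≤ n) :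
    pell n =
      ((3 : ℤ) ^ (n ^ 2 + n) % ((3 : ℤ) ^ (2 * n) - 2 * 3 ^ n - 1)) % (3 : ℤ) ^ n := by
  obtain rfl | hn := hn.eq_or_lt
  · norm_num [pell]
  have hsq : (3 : ℤ) ^ (2 * n) = (3 ^ n) ^ 2 := by rw [← pow_mul, mul_comm]
  have hpow : (3 : ℤ) ^ (n ^ 2 + n) = (3 ^ n) ^ (n + 1) := by rw [← pow_mul]; ring_nf
  rw [hsq, hpow, pow_succ_emod_emod_eq_pell (pell_succ_add_three_le_three_pow hn)]
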